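/- arXiv:1504.03453 — 2 statements merged into one kernel-verified Lean document; each statement's English description precedes it below -/
import Mathlib

section
/- For all integers j ≥ 1, twice the sum over j1 + j2 = j - 1 (j1, j2 ≥ 0) of a_{j1} * b_{j2} equals b_j - a_{j-1}, which also equals 2(j-1) * a_{j-1}. -/
def a (j : ℕ) : ℚ :=
  (Nat.factorial (2 * j) : ℚ) / ((Nat.factorial j : ℚ) * (Nat.factorial (j + 1) : ℚ))

def b (j : ℕ) : ℚ :=
  if j = 0 then 0
  else (Nat.factorial (2 * j - 1) : ℚ) / ((Nat.factorial j : ℚ) * (Nat.factorial (j - 1) : ℚ))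

/-!
`a k` is the Catalan number `C k` and `b (m + 1) = (2m + 1) C m`, so the convolution over
`antidiagonal (m + 1)` is `∑_{k + l = m} (2l + 1) C k C l`. Symmetrising in `k ↔ l` replaces
`2l + 1` by `k + l + 1 = m + 1`, and Catalan's recurrence turns the remaining sum into `C (m + 1)`.
-/

open Finset Nat

theorem two_mul_sum_antidiagonal_snd_mul {R : Type*} [CommSemiring R] (f : ℕ → R) (n : ℕ) :
    2 * ∑ p ∈ antidiagonal n, (p.2 : R) * (f p.1 * f p.2) =
      n * ∑ p ∈ antidiagonal n, f p.1 * f p.2 := by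
  calc 2 * ∑ p ∈ antidiagonal n, (p.2 : R) * (f p.1 * f p.2)
      = ∑ p ∈ antidiagonal n, (p.1 : R) * (f p.1 * f p.2)
        + ∑ p ∈ antidiagonal n, (p.2 : R) * (f p.1 * f p.2) := by
        rw [two_mul, ← Nat.sum_antidiagonal_swap]
        refine congrArg₂ _ (sum_congr rfl fun p _ => ?_) rfl
        simp only [Prod.fst_swap, Prod.snd_swap]
        ring
    _ = ∑ p ∈ antidiagonal n, ((p.1 + p.2 : ℕ) : R) * (f p.1 * f p.2) := by
        rw [← sum_add_distrib]
        refine sum_congr rfl fun p _ => ?_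
        push_cast; ring
    _ = n * ∑ p ∈ antidiagonal n, f p.1 * f p.2 := by
        rw [mul_sum]
        exact sum_congr rfl fun p hp => by rw [mem_antidiagonal.mp hp]

theorem a_eq_catalan (k : ℕ) : a k = catalan k := by
  have hcat : (k + 1) * catalan k * k ! * k ! = (2 * k)! := by
    rw [succ_mul_catalan_eq_centralBinom, centralBinom_eq_two_mul_choose]
    simpa [two_mul] using choose_mul_factorial_mul_factorial (le_add_right k k)
  rw [a, div_eq_iff (by positivity), ← hcat, factorial_succ]
  push_cast
  ring

theorem b_succ (m : ℕ) : b (m + 1) = (2 * m + 1) * a m := by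
  rw [b, if_neg m.succ_ne_zero, a, show 2 * (m + 1) - 1 = 2 * m + 1 by omega, factorial_succ,
    Nat.add_sub_cancel]
  push_cast
  field_simp

theorem sum_antidiagonal_a_mul_b (n : ℕ) :
    ∑ p ∈ antidiagonal n, a p.1 * b p.2 = n * a n := by
  cases n with
  | zero => simp [b]
  | succ m =>
    have hconv : ∑ p ∈ antidiagonal m, a p.1 * b (p.2 + 1)
        = 2 * ∑ p ∈ antidiagonal m, (p.2 : ℚ) * (catalan p.1 * catalan p.2)
          + ∑ p ∈ antidiagonal m, (catalan p.1 * catalan p.2 : ℚ) := by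
      rw [mul_sum, ← sum_add_distrib]
      refine sum_congr rfl fun p _ => ?_
      rw [b_succ, a_eq_catalan, a_eq_catalan]
      ring
    rw [sum_antidiagonal_succ', b, if_pos rfl, mul_zero, zero_add, hconv,
      two_mul_sum_antidiagonal_snd_mul (fun k => (catalan k : ℚ)), a_eq_catalan, catalan_succ']
    push_cast
    ring

theorem ab_convolution (j : ℕ) (hj : 1 ≤ j) :
    2 * (∑ p ∈ Finset.HasAntidiagonal.antidiagonal (j - 1), a p.1 * b p.2) = b j - a (j - 1) ∧
    b j - a (j - 1) = 2 * ((j : ℚ) - 1) * a (j - 1) := by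
  obtain ⟨n, rfl⟩ : ∃ n, j = n + 1 := ⟨j - 1, by omega⟩
  rw [Nat.add_sub_cancel, sum_antidiagonal_a_mul_b, b_succ]
  push_cast
  constructor <;> ring
end

section
/- For all integers j ≥ 0, the identity b_{j+1} + c_{j+1} = 4*b_j + 4*c_j + a_j holds. -/
def c (j : ℕ) : ℚ :=
  2 * ∑ p ∈ Finset.HasAntidiagonal.antidiagonal j, b p.1 * b p.2

open Finset Nat

theorem Finset.Nat.two_mul_sum_antidiagonal_fst_mul {R : Type*} [CommSemiring R] (u : ℕ → R)
    (n : ℕ) :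
    2 * ∑ p ∈ antidiagonal n, (p.1 : R) * (u p.1 * u p.2) =
      n * ∑ p ∈ antidiagonal n, u p.1 * u p.2 := by
  have swap : ∑ p ∈ antidiagonal n, (p.2 : R) * (u p.1 * u p.2) =
      ∑ p ∈ antidiagonal n, (p.1 : R) * (u p.1 * u p.2) := by
    rw [← Finset.Nat.sum_antidiagonal_swap]
    exact sum_congr rfl fun p _ => by simp only [Prod.fst_swap, Prod.snd_swap]; ring
  rw [two_mul]
  nth_rewrite 2 [← swap]
  rw [← sum_add_distrib, mul_sum]
  refine sum_congr rfl fun p hp => ?_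
  rw [← add_mul, ← Nat.cast_add, mem_antidiagonal.mp hp]

theorem Nat.succ_mul_sum_antidiagonal_centralBinom_mul_succ (n : ℕ) :
    (n + 1) * ∑ p ∈ antidiagonal (n + 1), p.1.centralBinom * p.2.centralBinom =
      4 * (n + 1) * ∑ p ∈ antidiagonal n, p.1.centralBinom * p.2.centralBinom := by
  have hfst := Finset.Nat.two_mul_sum_antidiagonal_fst_mul centralBinom
  simp only [Nat.cast_id] at hfst
  calc (n + 1) * ∑ p ∈ antidiagonal (n + 1), p.1.centralBinom * p.2.centralBinom
      = 2 * ∑ p ∈ antidiagonal n, (p.1 + 1) * (p.1 + 1).centralBinom * p.2.centralBinom := by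
        rw [← hfst, Finset.Nat.sum_antidiagonal_succ]
        simp only [zero_mul, zero_add, mul_assoc]
    _ = 2 * ∑ p ∈ antidiagonal n, 2 * (2 * p.1 + 1) * p.1.centralBinom * p.2.centralBinom := by
        simp only [Nat.succ_mul_centralBinom_succ]
    _ = 4 * (2 * ∑ p ∈ antidiagonal n, p.1 * (p.1.centralBinom * p.2.centralBinom)) +
          4 * ∑ p ∈ antidiagonal n, p.1.centralBinom * p.2.centralBinom := by
        simp only [mul_sum, ← sum_add_distrib]
        exact sum_congr rfl fun p _ => by ring
    _ = 4 * (n + 1) * ∑ p ∈ antidiagonal n, p.1.centralBinom * p.2.centralBinom := by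
        rw [hfst]; ring

theorem Nat.sum_antidiagonal_centralBinom_mul (n : ℕ) :
    ∑ p ∈ antidiagonal n, p.1.centralBinom * p.2.centralBinom = 4 ^ n := by
  induction n with
  | zero => simp
  | succ n ih =>
    apply Nat.eq_of_mul_eq_mul_left n.add_one_pos
    rw [Nat.succ_mul_sum_antidiagonal_centralBinom_mul_succ, ih]
    ring

theorem Nat.sum_antidiagonal_centralBinom_succ_mul_succ (m : ℕ) :
    2 * (m + 2).centralBinom +
      ∑ p ∈ antidiagonal m, (p.1 + 1).centralBinom * (p.2 + 1).centralBinom = 4 ^ (m + 2) := by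
  rw [← Nat.sum_antidiagonal_centralBinom_mul, Finset.Nat.sum_antidiagonal_succ,
    Finset.Nat.sum_antidiagonal_succ']
  simp only [centralBinom_zero]
  ring

theorem Nat.centralBinom_succ_eq_two_mul_choose (n : ℕ) :
    (n + 1).centralBinom = 2 * (2 * n + 1).choose n := by
  rw [centralBinom_eq_two_mul_choose, two_mul, ← add_assoc, choose_succ_succ' (n + 1 + n) n,
    choose_symm_add, ← two_mul, two_mul n, add_right_comm]

lemma b_zero : b 0 = 0 := if_pos rfl

lemma b_add_one (m : ℕ) : b (m + 1) = (2 * m + 1).choose m := by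
  rw [b, if_neg m.add_one_ne_zero, Nat.cast_choose ℚ (by omega),
    show 2 * (m + 1) - 1 = 2 * m + 1 by omega, show 2 * m + 1 - m = m + 1 by omega,
    Nat.add_sub_cancel, mul_comm (((m + 1)! : ℕ) : ℚ)]

lemma b_eq_centralBinom_div_two {j : ℕ} (hj : j ≠ 0) : b j = j.centralBinom / 2 := by
  obtain ⟨m, rfl⟩ := Nat.exists_eq_add_one_of_ne_zero hj
  rw [b_add_one, Nat.centralBinom_succ_eq_two_mul_choose]
  push_cast
  ring

lemma a_eq_centralBinom_div (j : ℕ) : a j = j.centralBinom / (j + 1) := by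
  rw [a, centralBinom_eq_two_mul_choose, Nat.cast_choose ℚ (by omega),
    show 2 * j - j = j by omega, Nat.factorial_succ]
  push_cast
  field_simp

lemma c_add_two (m : ℕ) : c (m + 2) = 4 ^ (m + 2) / 2 - (m + 2).centralBinom := by
  have hb (p : ℕ × ℕ) : b (p.1 + 1) * b (p.2 + 1) =
      ((p.1 + 1).centralBinom * (p.2 + 1).centralBinom : ℕ) / 4 := by
    rw [b_eq_centralBinom_div_two p.1.add_one_ne_zero,
      b_eq_centralBinom_div_two p.2.add_one_ne_zero]
    push_cast
    ring
  have h := congrArg (Nat.cast : ℕ → ℚ) (Nat.sum_antidiagonal_centralBinom_succ_mul_succ m)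
  push_cast at h
  rw [c, Finset.Nat.sum_antidiagonal_succ, Finset.Nat.sum_antidiagonal_succ']
  simp only [b_zero, zero_mul, mul_zero, zero_add, hb, ← sum_div]
  push_cast
  linear_combination h / 2

lemma b_add_c (j : ℕ) : b j + c j = (4 ^ j - j.centralBinom) / 2 := by
  match j with
  | 0 => simp [c, b_zero]
  | 1 => norm_num [c, b_zero, Finset.Nat.sum_antidiagonal_succ, b_add_one, Nat.centralBinom]
  | m + 2 =>
    rw [b_eq_centralBinom_div_two (Nat.add_one_ne_zero _), c_add_two]
    ring

theorem bc_recursion (j : ℕ) :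
    b (j + 1) + c (j + 1) = 4 * b j + 4 * c j + a j := by
  have h := congrArg (Nat.cast : ℕ → ℚ) (Nat.succ_mul_centralBinom_succ j)
  push_cast at h
  rw [← mul_add, b_add_c, b_add_c, a_eq_centralBinom_div]
  field_simp
  linear_combination -h
end
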